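/- arXiv:2509.20771 — 3 statements merged into one kernel-verified Lean document; each statement's English description precedes it below -/
import Mathlib

section
/- For all positive integers s and t with t > 2, A(s+1,t) ≥ A(s,t+1). -/
/-- The Ackermann function of the paper, defined for positive integers `s, t`:
`A(1,t) = 2t`, `A(s,1) = 2`, and `A(s,t) = A(s-1, A(s,t-1))` for `s, t > 1`.
(The value at arguments equal to `0` is junk.) -/
def A : ℕ → ℕ → ℕ
  | 0, _ => 0
  | 1, t => 2 * t
  | _+2, 0 => 0
  | _+2, 1 => 2
  | s+2, t+2 => A (s+1) (A (s+2) (t+1))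
termination_by s t => (s, t)

lemma A_ge : ∀ s t, 2 * (t + 1) ≤ A (s + 1) (t + 1)
  | 0, t => by simp [A]
  | s+1, 0 => by simp [A]
  | s+1, t+1 => by
    have h1 : 2 * (t + 1) ≤ A (s+2) (t+1) := A_ge (s+1) t
    obtain ⟨x, hx⟩ : ∃ x, A (s+2) (t+1) = x + 1 :=
      ⟨A (s+2) (t+1) - 1, by omega⟩
    have h2 := A_ge s x
    show 2 * (t + 2) ≤ A (s+2) (t+2)
    rw [A, hx]
    omega

lemma A_mono_succ (s t : ℕ) : A (s + 1) (t + 1) ≤ A (s + 1) (t + 2) := by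
  cases s with
  | zero => simp [A]
  | succ s =>
    obtain ⟨x, hx⟩ : ∃ x, A (s+2) (t+1) = x + 1 :=
      ⟨A (s+2) (t+1) - 1, by have h : 2 * (t+1) ≤ A (s+2) (t+1) := A_ge (s+1) t; omega⟩
    have h2 := A_ge s x
    show A (s+2) (t+1) ≤ A (s+2) (t+2)
    rw [A, hx]
    omega

lemma A_mono (s t u : ℕ) (h : t + 1 ≤ u) : A (s + 1) (t + 1) ≤ A (s + 1) u := by
  induction u with
  | zero => omega
  | succ u ih =>
    rcases Nat.lt_or_ge (t + 1) (u + 1) with h' | h'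
    · have hu : 1 ≤ u := by omega
      calc A (s+1) (t+1) ≤ A (s+1) u := ih (by omega)
        _ = A (s+1) ((u-1)+1) := by congr 1; omega
        _ ≤ A (s+1) ((u-1)+2) := A_mono_succ s (u-1)
        _ = A (s+1) (u+1) := by congr 1; omega
    · have : t + 1 = u + 1 := by omega
      rw [this]

/-- Lemma (Ackermann-properties iii): for all positive integers `s` and `t` with `t > 2`,
`A(s+1, t) ≥ A(s, t+1)`. -/
theorem ackermann_succ_fst_ge (s t : ℕ) (hs : 0 < s) (ht : 2 < t) :
    A s (t + 1) ≤ A (s + 1) t := by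
  obtain ⟨s', rfl⟩ : ∃ s', s = s' + 1 := ⟨s - 1, by omega⟩
  obtain ⟨t', rfl⟩ : ∃ t', t = t' + 3 := ⟨t - 3, by omega⟩
  show A (s'+1) (t'+4) ≤ A (s'+2) (t'+3)
  rw [show A (s'+2) (t'+3) = A (s'+1) (A (s'+2) (t'+2)) from by rw [A]]
  exact A_mono s' (t'+3) _ (by have h : 2 * (t'+2) ≤ A (s'+2) (t'+2) := A_ge (s'+1) (t'+1); omega)
end

section
/- For all positive integers s and t with s > 2, C(s,t) ≥ A(s-1,t). -/
/-- The function `C` of Füredi and Hajnal, defined for positive integers `s, t`: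
`C(1,t) = 1`, `C(s,1) = 2` for `s > 1`, and `C(s,t) = C(s,t-1) * C(s-1, C(s,t-1))` for `s, t > 1`.
(The value at arguments equal to `0` is junk.) -/
def C : ℕ → ℕ → ℕ
  | 0, _ => 0
  | 1, _ => 1
  | _+2, 0 => 0
  | _+2, 1 => 2
  | s+2, t+2 => C (s+2) (t+1) * C (s+1) (C (s+2) (t+1))
termination_by s t => (s, t)

lemma C_eq (s t : ℕ) : C (s+2) (t+2) = C (s+2) (t+1) * C (s+1) (C (s+2) (t+1)) := by
  rw [C]

lemma A_eq (s t : ℕ) : A (s+2) (t+2) = A (s+1) (A (s+2) (t+1)) := by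
  rw [A]

lemma C_pos : ∀ s t, 0 < s → 0 < t → 0 < C s t
  | 1, _+1, _, _ => by simp [C]
  | s+2, 1, _, _ => by simp [C]
  | s+2, t+2, _, _ => by
    rw [C_eq]
    have h1 := C_pos (s+2) (t+1) (by omega) (by omega)
    exact Nat.mul_pos h1 (C_pos (s+1) _ (by omega) h1)
termination_by s t => (s, t)

lemma A_pos : ∀ s t, 0 < s → 0 < t → 0 < A s t
  | 1, t+1, _, _ => by simp [A]
  | s+2, 1, _, _ => by simp [A]
  | s+2, t+2, _, _ => by
    rw [A_eq]
    exact A_pos (s+1) _ (by omega) (A_pos (s+2) (t+1) (by omega) (by omega))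
termination_by s t => (s, t)

lemma C_mono (s : ℕ) (hs : 0 < s) : ∀ a b, 0 < a → a ≤ b → C s a ≤ C s b := by
  intro a b ha hab
  induction b with
  | zero => omega
  | succ n ih =>
    rcases Nat.lt_or_ge a (n+1) with h | h
    · refine le_trans (ih (by omega)) ?_
      match s, n with
      | 1, n => simp [C]
      | s+2, 0 => omega
      | s+2, n+1 =>
        rw [C_eq]
        exact Nat.le_mul_of_pos_right _
          (C_pos (s+1) _ (by omega) (C_pos (s+2) (n+1) (by omega) (by omega)))
    · have : a = n + 1 := by omega
      subst this; rfl

lemma C_two (m : ℕ) (hm : 0 < m) : C 2 m = 2 := by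
  induction m with
  | zero => omega
  | succ n ih =>
    match n with
    | 0 => simp [C]
    | k+1 => rw [C_eq, ih (by omega)]; simp [C]

lemma main_lemma : ∀ s, 3 ≤ s → ∀ t, 1 ≤ t → A (s-1) t ≤ C s t := by
  intro s hs
  induction s, hs using Nat.le_induction with
  | base =>
    intro t ht
    induction t, ht using Nat.le_induction with
    | base => simp [A, C]
    | succ n hn ih =>
      obtain ⟨k, rfl⟩ : ∃ k, n = k + 1 := ⟨n - 1, by omega⟩
      have e1 : A 2 (k+2) = 2 * A 2 (k+1) := by
        have h := A_eq 0 k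
        norm_num at h
        rw [h, A]
      have e2 : C 3 (k+2) = C 3 (k+1) * 2 := by
        have h := C_eq 1 k
        norm_num at h
        rw [h, C_two _ (C_pos 3 (k+1) (by omega) (by omega))]
      simp only [show (3:ℕ)-1 = 2 from rfl] at ih ⊢
      show A 2 (k+2) ≤ C 3 (k+2)
      rw [e1, e2]
      omega
  | succ s hs ihs =>
    intro t ht
    induction t, ht using Nat.le_induction with
    | base =>
      obtain ⟨m, rfl⟩ : ∃ m, s = m + 2 := ⟨s - 2, by omega⟩
      simp [A, C]
    | succ n hn ih =>
      obtain ⟨k, rfl⟩ : ∃ k, n = k + 1 := ⟨n - 1, by omega⟩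
      obtain ⟨m, rfl⟩ : ∃ m, s = m + 2 := ⟨s - 2, by omega⟩
      show A (m+2) (k+2) ≤ C (m+3) (k+2)
      rw [A_eq, C_eq]
      have hApos : 0 < A (m+2) (k+1) := A_pos _ _ (by omega) (by omega)
      have h1 : A (m+1) (A (m+2) (k+1)) ≤ C (m+2) (A (m+2) (k+1)) :=
        ihs _ hApos
      have h2 : C (m+2) (A (m+2) (k+1)) ≤ C (m+2) (C (m+3) (k+1)) :=
        C_mono _ (by omega) _ _ hApos (ih)
      have h3 : 0 < C (m+3) (k+1) := C_pos _ _ (by omega) (by omega)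
      calc A (m+1) (A (m+2) (k+1)) ≤ C (m+2) (C (m+3) (k+1)) := le_trans h1 h2
        _ ≤ C (m+3) (k+1) * C (m+2) (C (m+3) (k+1)) := Nat.le_mul_of_pos_left _ h3

/-- For all positive integers `s` and `t` with `s > 2`, `C(s,t) ≥ A(s-1,t)`. -/
theorem C_ge_ackermann (s t : ℕ) (hs : 2 < s) (ht : 0 < t) :
    A (s - 1) t ≤ C s t := by
  exact main_lemma s hs t ht
end

section
/- For all positive integers s and t, t·K'(s,t) ≤ A(s+1, t+2) − 3. -/
/-- The pair `(K(s,t), K'(s,t))` of auxiliary functions, defined for positive integers `s, t`: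
`K(1,t) = 2`, `K'(1,t) = 5`; `K(s,1) = 2^s`, `K'(s,1) = 2^s + 3`; and for `s, t > 1`,
`K(s,t) = K(s,t-1) * K(s-1, K'(s,t-1))` and
`K'(s,t) = K'(s,t-1) * K(s-1, K'(s,t-1)) + K'(s-1, K'(s,t-1))`.
(The value at arguments equal to `0` is junk.) -/
def KK : ℕ → ℕ → ℕ × ℕ
  | 0, _ => (0, 0)
  | 1, _ => (2, 5)
  | _+2, 0 => (0, 0)
  | s+2, 1 => (2^(s+2), 2^(s+2) + 3)
  | s+2, t+2 =>
    let p := KK (s+2) (t+1)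
    let q := KK (s+1) p.2
    (p.1 * q.1, p.2 * q.1 + q.2)
termination_by s t => (s, t)

/-- The function `K(s,t)`. -/
def K (s t : ℕ) : ℕ := (KK s t).1

/-- The function `K'(s,t)`. -/
def K' (s t : ℕ) : ℕ := (KK s t).2

/-!
Induction on `s`, and for fixed `s` on `t`. Write `m = K'(s+1,t)`. The recursion and `K ≤ K'`
give `K'(s+1,t+1) ≤ (m+1)·K'(s,m)`, and the induction hypothesis in `s` bounds `m·K'(s,m) + 3`
by `B = A(s+1,m+2)`. Since `A(s+1,·)` at least doubles at every step,
`A(s+2,t+3) = A(s+1, A(s+2,t+2)) ≥ 2^(t+2)·B` as soon as `A(s+2,t+2) ≥ m+t+4`; this follows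
from the induction hypothesis in `t` when `t ≥ 2`, and from `A(s+2,3) = A(s+1,4) ≥ 2^(s+3)`
when `t = 1`. Finally `2^(t+2) ≥ 2t+3` absorbs the factor `(t+1)(m+1)/m`.
-/

lemma A_one (t : ℕ) : A 1 t = 2 * t := by rw [A]

lemma A_add_two_zero (s : ℕ) : A (s + 2) 0 = 0 := by rw [A]

lemma A_add_two_one (s : ℕ) : A (s + 2) 1 = 2 := by rw [A]

lemma A_add_two_add_two (s t : ℕ) : A (s + 2) (t + 2) = A (s + 1) (A (s + 2) (t + 1)) := by
  rw [A]

lemma KK_zero_left (t : ℕ) : KK 0 t = (0, 0) := by rw [KK]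

lemma K_one (t : ℕ) : K 1 t = 2 := by rw [K, KK]

lemma K'_one (t : ℕ) : K' 1 t = 5 := by rw [K', KK]

lemma KK_add_two_zero (s : ℕ) : KK (s + 2) 0 = (0, 0) := by rw [KK]

lemma K_add_two_one (s : ℕ) : K (s + 2) 1 = 2 ^ (s + 2) := by rw [K, KK]

lemma K'_add_two_one (s : ℕ) : K' (s + 2) 1 = 2 ^ (s + 2) + 3 := by rw [K', KK]

lemma K_add_two_add_two (s t : ℕ) :
    K (s + 2) (t + 2) = K (s + 2) (t + 1) * K (s + 1) (K' (s + 2) (t + 1)) := by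
  rw [K, KK]; rfl

lemma K'_add_two_add_two (s t : ℕ) :
    K' (s + 2) (t + 2) =
      K' (s + 2) (t + 1) * K (s + 1) (K' (s + 2) (t + 1)) + K' (s + 1) (K' (s + 2) (t + 1)) := by
  rw [K', KK]; rfl

lemma two_mul_le_A (s t : ℕ) : 2 * t ≤ A (s + 1) t := by
  induction s generalizing t with
  | zero => rw [A_one]
  | succ s ih =>
    induction t with
    | zero => omega
    | succ t iht =>
      cases t with
      | zero => rw [A_add_two_one]
      | succ t =>
        replace iht : 2 * (t + 1) ≤ A (s + 2) (t + 1) := iht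
        rw [A_add_two_add_two]
        calc 2 * (t + 2) ≤ 2 * A (s + 2) (t + 1) := by omega
          _ ≤ A (s + 1) (A (s + 2) (t + 1)) := ih _

lemma two_mul_A_le_A_succ (s t : ℕ) : 2 * A (s + 2) t ≤ A (s + 2) (t + 1) := by
  cases t with
  | zero => rw [A_add_two_zero]; omega
  | succ t => exact A_add_two_add_two s t ▸ two_mul_le_A s _

lemma A_add_two_monotone (s : ℕ) : Monotone (A (s + 2)) :=
  monotone_nat_of_le_succ fun t =>
    (Nat.le_mul_of_pos_left _ two_pos).trans (two_mul_A_le_A_succ s t)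

lemma two_pow_mul_A_le (s t k : ℕ) : 2 ^ k * A (s + 2) t ≤ A (s + 2) (t + k) := by
  induction k with
  | zero => simp
  | succ k ih =>
    calc 2 ^ (k + 1) * A (s + 2) t = 2 * (2 ^ k * A (s + 2) t) := by ring
      _ ≤ 2 * A (s + 2) (t + k) := Nat.mul_le_mul_left 2 ih
      _ ≤ A (s + 2) (t + (k + 1)) := two_mul_A_le_A_succ s _

lemma two_pow_le_A (s t : ℕ) : 2 ^ (t + 1) ≤ A (s + 2) (t + 1) := by
  simpa [A_add_two_one, pow_succ, add_comm] using two_pow_mul_A_le s 1 t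

lemma A_two (s : ℕ) : A (s + 1) 2 = 4 := by
  induction s with
  | zero => rw [A_one]
  | succ s ih => rw [A_add_two_add_two, A_add_two_one, ih]

lemma two_pow_le_A_three (s : ℕ) : 2 ^ (s + 3) ≤ A (s + 2) 3 := by
  induction s with
  | zero => exact two_pow_le_A 0 2
  | succ s ih =>
    calc 2 ^ (s + 1 + 3) = 2 * 2 ^ (s + 3) := by ring
      _ ≤ 2 * A (s + 2) 3 := Nat.mul_le_mul_left 2 ih
      _ ≤ A (s + 2) 4 := two_mul_A_le_A_succ s 3
      _ = A (s + 3) 3 := by rw [A_add_two_add_two (s + 1) 1, A_add_two_add_two (s + 1) 0,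
          A_add_two_one, A_two]

lemma K_le_K' (s t : ℕ) : K s t ≤ K' s t := by
  match s, t with
  | 0, t => simp [K, K', KK_zero_left]
  | 1, t => rw [K_one, K'_one]; omega
  | s + 2, 0 => simp [K, K', KK_add_two_zero]
  | s + 2, 1 => rw [K_add_two_one, K'_add_two_one]; omega
  | s + 2, t + 2 =>
    rw [K_add_two_add_two, K'_add_two_add_two]
    exact (Nat.mul_le_mul_right _ (K_le_K' (s + 2) (t + 1))).trans (Nat.le_add_right _ _)

lemma five_le_K' (s t : ℕ) : 5 ≤ K' (s + 1) (t + 1) := by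
  induction s generalizing t with
  | zero => rw [K'_one]
  | succ s ih =>
    induction t with
    | zero =>
      show 5 ≤ K' (s + 2) 1
      rw [K'_add_two_one]
      have : 2 ^ 2 ≤ 2 ^ (s + 2) := Nat.pow_le_pow_right two_pos (by omega)
      omega
    | succ t iht =>
      show 5 ≤ K' (s + 2) (t + 2)
      replace iht : 5 ≤ K' (s + 2) (t + 1) := iht
      obtain ⟨m, hm⟩ : ∃ m, K' (s + 2) (t + 1) = m + 1 := Nat.exists_eq_add_one.2 (by omega)
      rw [K'_add_two_add_two, hm]
      exact (ih m).trans (Nat.le_add_left _ _)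

lemma K'_add_two_one_add_five_le (s : ℕ) : K' (s + 2) 1 + 5 ≤ A (s + 3) 3 := by
  have h4 : 2 ^ 2 ≤ 2 ^ (s + 2) := Nat.pow_le_pow_right two_pos (by omega)
  have h16 : 2 ^ (s + 4) = 4 * 2 ^ (s + 2) := by ring
  have : 2 ^ (s + 4) ≤ A (s + 3) 3 := two_pow_le_A_three (s + 1)
  rw [K'_add_two_one]
  omega

lemma eight_mul_succ_le_two_pow (t : ℕ) : 8 * (t + 1) ≤ 2 ^ (t + 3) := by
  have := Nat.lt_two_pow_self (n := t)
  rw [pow_add]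
  omega

lemma mul_add_add_three_le (t m q r : ℕ) (hqr : q ≤ r) :
    (t + 2) * ((m + 1) * q + r) + 3 ≤ 2 ^ (t + 3) * ((m + 1) * r + 3) := by
  have hpow := eight_mul_succ_le_two_pow t
  calc (t + 2) * ((m + 1) * q + r) + 3 ≤ (t + 2) * (2 * ((m + 1) * r)) + 3 := by gcongr; nlinarith
    _ ≤ (2 * t + 5) * ((m + 1) * r + 3) := by nlinarith
    _ ≤ 2 ^ (t + 3) * ((m + 1) * r + 3) := by gcongr; omega

theorem mul_K'_add_three_le_A (s t : ℕ) :
    (t + 1) * K' (s + 1) (t + 1) + 3 ≤ A (s + 2) (t + 3) := by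
  induction s generalizing t with
  | zero =>
    show (t + 1) * K' 1 (t + 1) + 3 ≤ A 2 (t + 3)
    rw [K'_one]
    have : 2 ^ (t + 3) ≤ A 2 (t + 3) := two_pow_le_A 0 (t + 2)
    have := eight_mul_succ_le_two_pow t
    omega
  | succ s ih =>
    induction t with
    | zero =>
      show 1 * K' (s + 2) 1 + 3 ≤ A (s + 3) 3
      have := K'_add_two_one_add_five_le s
      omega
    | succ t iht =>
      show (t + 2) * K' (s + 2) (t + 2) + 3 ≤ A (s + 3) (t + 4)
      replace iht : (t + 1) * K' (s + 2) (t + 1) + 3 ≤ A (s + 3) (t + 3) := iht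
      have hm5 : 5 ≤ K' (s + 2) (t + 1) := five_le_K' (s + 1) t
      obtain ⟨m, hm⟩ : ∃ m, K' (s + 2) (t + 1) = m + 1 := Nat.exists_eq_add_one.2 (by omega)
      rw [hm] at iht hm5
      have hn : m + t + 6 ≤ A (s + 3) (t + 3) := by
        cases t with
        | zero => simpa [hm] using K'_add_two_one_add_five_le s
        | succ t => nlinarith
      calc (t + 2) * K' (s + 2) (t + 2) + 3
          = (t + 2) * ((m + 1) * K (s + 1) (m + 1) + K' (s + 1) (m + 1)) + 3 := by
            rw [K'_add_two_add_two, hm]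
        _ ≤ 2 ^ (t + 3) * ((m + 1) * K' (s + 1) (m + 1) + 3) :=
            mul_add_add_three_le t m _ _ (K_le_K' _ _)
        _ ≤ 2 ^ (t + 3) * A (s + 2) (m + 3) := Nat.mul_le_mul_left _ (ih m)
        _ ≤ A (s + 2) (m + 3 + (t + 3)) := two_pow_mul_A_le s _ _
        _ ≤ A (s + 2) (A (s + 3) (t + 3)) := A_add_two_monotone s (by omega)
        _ = A (s + 3) (t + 4) := (A_add_two_add_two (s + 1) (t + 2)).symm

theorem mul_K'_le_ackermann_sub_three_general (s t : ℕ) :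
    t * K' s t ≤ A (s + 1) (t + 2) - 3 := by
  match s, t with
  | 0, t => simp [K', KK_zero_left]
  | s + 1, 0 => simp
  | s + 1, t + 1 =>
    have : (t + 1) * K' (s + 1) (t + 1) + 3 ≤ A (s + 2) (t + 3) := mul_K'_add_three_le_A s t
    show (t + 1) * K' (s + 1) (t + 1) ≤ A (s + 2) (t + 3) - 3
    omega

/-- For all positive integers `s` and `t`, `t * K'(s,t) ≤ A(s+1, t+2) - 3`. -/
theorem mul_K'_le_ackermann_sub_three (s t : ℕ) (hs : 0 < s) (ht : 0 < t) :
    t * K' s t ≤ A (s + 1) (t + 2) - 3 :=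
  mul_K'_le_ackermann_sub_three_general s t
end
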